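/- arXiv:1302.5692 — 2 statements merged into one kernel-verified Lean document; each statement's English description precedes it below -/
import Mathlib

section
/- Let 𝒞 be a strict Fraïssé class with Fraïssé limit U, such that (1) 𝒞 is closed with respect to finite products, (2) 𝒞 has the homo amalgamation property (HAP), (3) the coproduct of ℵ₀ copies of U exists in the category of countable structures with age contained in 𝒞 and homomorphisms as morphisms, and (4) End U is not finitely generated as a monoid. Then the clone Pol U has uncountable cofinality. -/
universe u v w

open FirstOrder FirstOrder.Language CategoryTheory

namespace UHomog

variable (L : FirstOrder.Language.{u, v})

/-- The class `𝒞̄` of countable structures whose age is contained in `K`. -/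
def InBar (K : Set (Bundled.{w} L.Structure)) (A : Type w) [L.Structure A] : Prop :=
  Countable A ∧ L.age A ⊆ K

/-- A homomorphism `u : U → T` is universal within `𝒞̄ = K̄` if every homomorphism from a member
of `K̄` to `T` factors through an embedding into `U`. -/
def IsUniversalHom (K : Set (Bundled.{w} L.Structure)) {U T : Type w}
    [L.Structure U] [L.Structure T] (u : U →[L] T) : Prop :=
  ∀ A : Bundled.{w} L.Structure, InBar L K A → ∀ h : A →[L] T,
    ∃ ι : A ↪[L] U, ∀ a : A, u (ι a) = h a

/-- A homomorphism `u : U → T` is homogeneous if every embedding of a finitely generated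
substructure of `U` into `U` compatible with `u` extends to an automorphism of `U` compatible
with `u`. -/
def IsHomogeneousHom {U T : Type w} [L.Structure U] [L.Structure T] (u : U →[L] T) : Prop :=
  ∀ S : L.Substructure U, S.FG → ∀ ι : S ↪[L] U,
    (∀ s : S, u (ι s) = u s) →
    ∃ α : U ≃[L] U, (∀ x : U, u (α x) = u x) ∧ ∀ s : S, α s = ι s

/-- An age: a class of finitely generated structures with countably many isomorphism types,
closed under isomorphism, with the hereditary property and the joint embedding property. -/
def IsAge (K : Set (Bundled.{w} L.Structure)) : Prop :=
  K.Nonempty ∧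
  (∀ M : Bundled.{w} L.Structure, M ∈ K → Structure.FG L M) ∧
  (∀ M N : Bundled.{w} L.Structure, Nonempty (M ≃[L] N) → (M ∈ K ↔ N ∈ K)) ∧
  (∃ S : Set (Bundled.{w} L.Structure), S.Countable ∧
    ∀ M ∈ K, ∃ N ∈ S, Nonempty (M ≃[L] N)) ∧
  Hereditary K ∧ JointEmbedding K

/-- The square `g₁ ∘ f₁ = g₂ ∘ f₂` is a pushout square in the category of countable structures
with age contained in `K`, with homomorphisms as morphisms. -/
def IsPushoutSquare (K : Set (Bundled.{w} L.Structure)) {A B₁ B₂ C : Type w}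
    [L.Structure A] [L.Structure B₁] [L.Structure B₂] [L.Structure C]
    (f₁ : A ↪[L] B₁) (f₂ : A ↪[L] B₂) (g₁ : B₁ →[L] C) (g₂ : B₂ →[L] C) : Prop :=
  g₁.comp f₁.toHom = g₂.comp f₂.toHom ∧
  ∀ D : Bundled.{w} L.Structure, InBar L K D → ∀ (k₁ : B₁ →[L] D) (k₂ : B₂ →[L] D),
    k₁.comp f₁.toHom = k₂.comp f₂.toHom →
    ∃! m : C →[L] D, m.comp g₁ = k₁ ∧ m.comp g₂ = k₂

/-- A strict Fraïssé class: a Fraïssé class in which every span of embeddings can be completed to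
a canonical (pushout) amalgam. -/
def IsStrictFraisse (K : Set (Bundled.{w} L.Structure)) : Prop :=
  IsFraisse K ∧
  ∀ A B₁ B₂ : Bundled.{w} L.Structure, A ∈ K → B₁ ∈ K → B₂ ∈ K →
    ∀ (f₁ : A ↪[L] B₁) (f₂ : A ↪[L] B₂),
      ∃ (C : Bundled.{w} L.Structure) (g₁ : B₁ →[L] C) (g₂ : B₂ →[L] C),
        C ∈ K ∧ IsPushoutSquare L K f₁ f₂ g₁ g₂

/-- A Fraïssé class `K₀` is free in the strict Fraïssé class `K` if it is closed with respect to
canonical (pushout) amalgams in `K`. -/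
def IsFreeIn (K₀ K : Set (Bundled.{w} L.Structure)) : Prop :=
  K₀ ⊆ K ∧
  ∀ A B₁ B₂ : Bundled.{w} L.Structure, A ∈ K₀ → B₁ ∈ K₀ → B₂ ∈ K₀ →
    ∀ (f₁ : A ↪[L] B₁) (f₂ : A ↪[L] B₂),
      ∃ (C : Bundled.{w} L.Structure) (g₁ : B₁ →[L] C) (g₂ : B₂ →[L] C),
        C ∈ K₀ ∧ IsPushoutSquare L K f₁ f₂ g₁ g₂

/-- The amalgamated extension property. -/
def AmalgamatedExtension (K : Set (Bundled.{w} L.Structure)) : Prop :=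
  ∀ A B₁ B₂ T : Bundled.{w} L.Structure, A ∈ K → B₁ ∈ K → B₂ ∈ K → T ∈ K →
    ∀ (f₁ : A ↪[L] B₁) (f₂ : A ↪[L] B₂) (h₁ : B₁ →[L] T) (h₂ : B₂ →[L] T),
      h₁.comp f₁.toHom = h₂.comp f₂.toHom →
      ∃ (C T' : Bundled.{w} L.Structure) (g₁ : B₁ ↪[L] C) (g₂ : B₂ ↪[L] C)
        (k : T ↪[L] T') (h : C →[L] T'),
        C ∈ K ∧ T' ∈ K ∧ g₁.comp f₁ = g₂.comp f₂ ∧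
        h.comp g₁.toHom = k.toHom.comp h₁ ∧ h.comp g₂.toHom = k.toHom.comp h₂

/-- The homo amalgamation property (HAP). -/
def HAP (K : Set (Bundled.{w} L.Structure)) : Prop :=
  ∀ A B₁ B₂ : Bundled.{w} L.Structure, A ∈ K → B₁ ∈ K → B₂ ∈ K →
    ∀ (f₁ : A ↪[L] B₁) (f₂ : A →[L] B₂),
      ∃ (C : Bundled.{w} L.Structure) (g₁ : B₁ →[L] C) (g₂ : B₂ ↪[L] C),
        C ∈ K ∧ g₁.comp f₁.toHom = g₂.toHom.comp f₂

/-- A homomorphism `r : A → B` is a retraction if it has a section. -/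
def IsRetraction {A B : Type w} [L.Structure A] [L.Structure B] (r : A →[L] B) : Prop :=
  ∃ ι : B →[L] A, ∀ b : B, r (ι b) = b

end UHomog


namespace CloneTheory

/-- Finitary operations on `A`: the element `⟨n, f⟩` is an operation of arity `n + 1`
(so all arities are `≥ 1`). -/
def Ops (A : Type w) : Type w := Σ n : ℕ, (Fin (n + 1) → A) → A

/-- `S` is a clone on `A`: it contains all projections and is closed under composition. -/
structure IsClone (A : Type w) (S : Set (Ops A)) : Prop where
  proj : ∀ (n : ℕ) (i : Fin (n + 1)), (⟨n, fun x => x i⟩ : Ops A) ∈ S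
  comp : ∀ (n m : ℕ) (f : (Fin (n + 1) → A) → A) (g : Fin (n + 1) → (Fin (m + 1) → A) → A),
    (⟨n, f⟩ : Ops A) ∈ S → (∀ i, (⟨m, g i⟩ : Ops A) ∈ S) →
    (⟨m, fun x => f fun i => g i x⟩ : Ops A) ∈ S

/-- The clone generated by a set of operations. -/
def cloneGen (A : Type w) (M : Set (Ops A)) : Set (Ops A) :=
  ⋂₀ {S : Set (Ops A) | IsClone A S ∧ M ⊆ S}

/-- The complex product of two sets of operations. -/
def cProd (A : Type w) (U V : Set (Ops A)) : Set (Ops A) :=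
  {op | ∃ (n m : ℕ) (f : (Fin (n + 1) → A) → A) (g : Fin (n + 1) → (Fin (m + 1) → A) → A),
    (⟨n, f⟩ : Ops A) ∈ U ∧ (∀ i, (⟨m, g i⟩ : Ops A) ∈ V) ∧
    op = ⟨m, fun x => f fun i => g i x⟩}

/-- The set `J_A^{(k)}` of projections of arity `k + 1`. -/
def projSet (A : Type w) (k : ℕ) : Set (Ops A) :=
  {op | ∃ i : Fin (k + 1), op = ⟨k, fun x => x i⟩}

/-- The sets `U^{[k,i]}`: operations of arity `k + 1` obtained from `U` by terms of depth
at most `i`. -/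
def iter (A : Type w) (U : Set (Ops A)) (k : ℕ) : ℕ → Set (Ops A)
  | 0 => projSet A k
  | i + 1 => cProd A U (iter A U k i) ∪ iter A U k i

/-- The part of `F` of arity `k + 1`. -/
def arityPart (A : Type w) (F : Set (Ops A)) (k : ℕ) : Set (Ops A) :=
  {op | op ∈ F ∧ op.1 = k}

/-- A clone `F` has the Bergman property if for every generating set `H` and every arity there
is a uniform depth bound generating the whole part of that arity. -/
def BergmanProperty (A : Type w) (F : Set (Ops A)) : Prop :=
  ∀ H : Set (Ops A), H ⊆ F → cloneGen A H = F →
    ∀ k : ℕ, ∃ n : ℕ, iter A H k n = arityPart A F k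

/-- A clone `F` has uncountable cofinality: there is no countable increasing chain of proper
subclones of `F` whose union is `F`. -/
def UncountableCofinality (A : Type w) (F : Set (Ops A)) : Prop :=
  ¬ ∃ c : ℕ → Set (Ops A),
      (∀ n, IsClone A (c n)) ∧ (∀ n, c n ⊆ F) ∧ (∀ n, c n ⊆ c (n + 1)) ∧
      (∀ n, c n ≠ F) ∧ (⋃ n, c n) = F

/-- A clone `F` has uncountable strong cofinality: there is no countable strong cofinal chain
for `F`. -/
def UncountableStrongCofinality (A : Type w) (F : Set (Ops A)) : Prop :=
  ¬ ∃ c : ℕ → Set (Ops A),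
      (∀ n, c n ⊆ c (n + 1)) ∧ (∀ n, c n ⊆ F) ∧ (∀ n, c n ≠ F) ∧ (⋃ n, c n) = F ∧
      (∃ k₀ : ℕ, ∀ n, ∀ k, k₀ ≤ k → arityPart A (c n) k ≠ arityPart A F k) ∧
      (∀ n, ∃ m, ∀ k, iter A (c n) k 2 ⊆ c m)

/-- A clone is finitely generated if it is generated by a finite set. -/
def FinitelyGeneratedClone (A : Type w) (F : Set (Ops A)) : Prop :=
  ∃ H : Set (Ops A), H.Finite ∧ H ⊆ F ∧ cloneGen A H = F

end CloneTheory

namespace CloneTheory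

open FirstOrder FirstOrder.Language

/-- The product (power) structure on `ι → M`. -/
instance piStructure (L : FirstOrder.Language.{u, v}) (ι : Type*) (M : Type w)
    [L.Structure M] : L.Structure (ι → M) where
  funMap f x i := Structure.funMap f fun j => x j i
  RelMap r x := ∀ i, Structure.RelMap r fun j => x j i

/-- The product structure on `M × N`. -/
instance prodStructure (L : FirstOrder.Language.{u, v}) (M N : Type w)
    [L.Structure M] [L.Structure N] : L.Structure (M × N) where
  funMap f x := (Structure.funMap f fun i => (x i).1, Structure.funMap f fun i => (x i).2)
  RelMap r x := Structure.RelMap r (fun i => (x i).1) ∧ Structure.RelMap r fun i => (x i).2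

/-- The polymorphism clone of a structure `M`. -/
def PolSet (L : FirstOrder.Language.{u, v}) (M : Type w) [L.Structure M] : Set (Ops M) :=
  {op | ∃ h : (Fin (op.1 + 1) → M) →[L] M, ⇑h = op.2}

end CloneTheory

namespace UHomog

open FirstOrder FirstOrder.Language

/-- The coproduct of countably many copies of `U` exists in the category of countable structures
with age contained in `K`, with homomorphisms as morphisms. -/
def CoproductOfCopiesExists (L : FirstOrder.Language.{u, v})
    (K : Set (Bundled.{w} L.Structure)) (U : Type w) [L.Structure U] : Prop :=
  ∃ (C : Bundled.{w} L.Structure) (ins : ℕ → (U →[L] C)),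
    InBar L K C ∧
    ∀ D : Bundled.{w} L.Structure, InBar L K D → ∀ f : ℕ → (U →[L] D),
      ∃! g : C →[L] D, ∀ i, g.comp (ins i) = f i

/-- The submonoid of the endomorphism monoid generated by a set of endomorphisms. -/
def monClosure (L : FirstOrder.Language.{u, v}) (U : Type w) [L.Structure U]
    (S : Set (U →[L] U)) : Set (U →[L] U) :=
  ⋂₀ {T | S ⊆ T ∧ Hom.id L U ∈ T ∧ ∀ f ∈ T, ∀ g ∈ T, f.comp g ∈ T}

/-- The endomorphism monoid of `U` is finitely generated. -/
def EndFinitelyGenerated (L : FirstOrder.Language.{u, v}) (U : Type w) [L.Structure U] : Prop :=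
  ∃ S : Set (U →[L] U), S.Finite ∧ monClosure L U S = Set.univ

end UHomog


namespace Statement15Aux

open UHomog CloneTheory FirstOrder FirstOrder.Language Set

/-! ### Clone lemmas -/

section Clone

variable {A : Type w}

theorem isClone_cloneGen (M : Set (Ops A)) : IsClone A (cloneGen A M) := by
  constructor
  · intro n i S hS
    exact hS.1.proj n i
  · intro n m f g hf hg S hS
    exact hS.1.comp n m f g (hf S hS) (fun i => hg i S hS)

theorem subset_cloneGen (M : Set (Ops A)) : M ⊆ cloneGen A M := by
  intro x hx S hS
  exact hS.2 hx

theorem cloneGen_subset {M S : Set (Ops A)} (hS : IsClone A S) (hM : M ⊆ S) :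
    cloneGen A M ⊆ S := fun _ hx => hx S ⟨hS, hM⟩

end Clone

/-! ### Structure helper lemmas -/

section Hom

variable {L : FirstOrder.Language.{u, v}} {U : Type w} [L.Structure U]

/-- The `i`-th projection as a homomorphism from the power structure. -/
def projHom (k : ℕ) (i : Fin (k + 1)) : (Fin (k + 1) → U) →[L] U where
  toFun x := x i
  map_fun' f x := rfl
  map_rel' r x h := h i

/-- Tupling of endomorphisms as a homomorphism into the power structure. -/
def tupleHom {k : ℕ} (r : Fin (k + 1) → (U →[L] U)) : U →[L] (Fin (k + 1) → U) where
  toFun z i := r i z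
  map_fun' f x := by
    funext i
    exact (r i).map_fun' f x
  map_rel' rl x h i := (r i).map_rel' rl x h

/-- A homomorphism whose composition with another homomorphism is an embedding is itself an
embedding. -/
def Hom.toEmbeddingOfComp {B C : Type w} [L.Structure B] [L.Structure C]
    (g : U →[L] B) (e : U ↪[L] C) (m : B →[L] C) (h : ∀ a, m (g a) = e a) : U ↪[L] B where
  toFun := g
  inj' a b hab := e.injective (by rw [← h, ← h, hab])
  map_fun' f x := g.map_fun' f x
  map_rel' r x := by
    refine ⟨fun hr => ?_, fun hr => g.map_rel' r x hr⟩
    have : Structure.RelMap r (⇑m ∘ ⇑g ∘ x) := m.map_rel' r _ hr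
    have h2 : (⇑m ∘ ⇑g ∘ x) = ⇑e ∘ x := by
      funext i; exact h (x i)
    rw [h2] at this
    exact e.map_rel' r x |>.1 this

end Hom


/-! ### Fraisse limit helper lemmas -/

section Fraisse

variable {L : FirstOrder.Language.{u, v}} [Countable (Σ l, L.Functions l)]
variable {K : Set (Bundled.{w} L.Structure)} {U : Type w} [L.Structure U] [Countable U]

theorem extensionPair_of_age_subset (hU : IsFraisseLimit K U) {A : Type w} [L.Structure A]
    (hage : L.age A ⊆ K) : L.IsExtensionPair A U := by
  intro ⟨f, f_FG⟩ m
  let S := f.dom ⊔ Substructure.closure L {m}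
  have S_FG : S.FG := f_FG.sup (Substructure.fg_closure_singleton _)
  have S_in_age_U : (⟨S, inferInstance⟩ : Bundled L.Structure) ∈ L.age U := by
    rw [hU.age]
    exact hage (age.fg_substructure S_FG)
  haveI nonempty_S_U : Nonempty (S ↪[L] U) := S_in_age_U.2
  let ⟨g, g_eq⟩ := hU.ultrahomogeneous.extend_embedding (f.dom.fg_iff_structure_fg.1 f_FG)
    ((Substructure.subtype f.cod).comp f.toEquiv.toEmbedding)
    (Substructure.inclusion (le_sup_left : _ ≤ S))
  refine ⟨⟨⟨S, g.toHom.range, g.equivRange⟩, S_FG⟩,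
    Substructure.subset_closure.trans (le_sup_right : _ ≤ S) (Set.mem_singleton m),
    ⟨le_sup_left, ?_⟩⟩
  ext
  simp [Subtype.mk_le_mk, PartialEquiv.le_def, g_eq]

theorem nonempty_embedding_of_age_subset (hU : IsFraisseLimit K U) (A : Type w) [L.Structure A]
    [Countable A] (hage : L.age A ⊆ K) : Nonempty (A ↪[L] U) := by
  have hbot : (⟨(⊥ : L.Substructure A), inferInstance⟩ : Bundled L.Structure) ∈ L.age U := by
    rw [hU.age]
    exact hage (age.fg_substructure Substructure.fg_bot)
  obtain ⟨e⟩ := hbot.2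
  obtain ⟨f, _⟩ := embedding_from_cg Structure.cg_of_countable
    ⟨⟨⊥, e.toHom.range, e.equivRange⟩, Substructure.fg_bot⟩
    (extensionPair_of_age_subset hU hage)
  exact ⟨f⟩

/-- Extension property of the Fraisse limit: an embedding of a finitely generated substructure
of `U` into a member of `K` can be inverted by an embedding into `U`. -/
theorem extend_substructure (hU : IsFraisseLimit K U) {P : L.Substructure U} (hfg : P.FG)
    {B : Bundled.{w} L.Structure} (hB : B ∈ K) (u : (↥P : Type w) ↪[L] ↥B) :
    ∃ ψ : ↥B ↪[L] U, ∀ z : ↥P, ψ (u z) = (z : U) := by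
  haveI : Nonempty (↥B ↪[L] U) := by
    rw [← hU.age] at hB
    exact hB.2
  obtain ⟨ψ, hψ⟩ := hU.ultrahomogeneous.extend_embedding (P.fg_iff_structure_fg.1 hfg)
    P.subtype u
  exact ⟨ψ, fun z => (congr_fun (congr_arg DFunLike.coe hψ) z).symm⟩

end Fraisse


/-! ### HAP extension, pushouts, products -/

section Hap

variable {L : FirstOrder.Language.{u, v}} [Countable (Σ l, L.Functions l)]
variable {K : Set (Bundled.{w} L.Structure)} {U : Type w} [L.Structure U] [Countable U]

theorem inBar_of_mem (hF : IsFraisse K) {X : Bundled.{w} L.Structure} (hX : X ∈ K) :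
    InBar L K X := by
  refine ⟨?_, hF.hereditary X hX⟩
  exact Structure.cg_iff_countable.1 (hF.FG X hX).cg

/-- Extension of homomorphisms into `U` along embeddings between members of `K`. -/
theorem hom_extend (hF : IsFraisse K) (hU : IsFraisseLimit K U) (hhap : HAP L K)
    {Q P' : Bundled.{w} L.Structure} (hQ : Q ∈ K) (hP' : P' ∈ K) (u : ↥Q ↪[L] ↥P')
    (k : ↥Q →[L] U) : ∃ k' : ↥P' →[L] U, ∀ z, k' (u z) = k z := by
  have hfgQ : Structure.FG L ↥Q := hF.FG Q hQ
  have hrfg : k.range.FG := hfgQ.range k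
  have hBmem : (⟨↥k.range, inferInstance⟩ : Bundled L.Structure) ∈ K :=
    hU.age ▸ age.fg_substructure hrfg
  obtain ⟨C, g₁, g₂, hC, hsq⟩ := hhap Q P' ⟨↥k.range, inferInstance⟩ hQ hP' hBmem u
    (Hom.codRestrict k.range k fun c => k.mem_range_self c)
  obtain ⟨ψ, hψ⟩ := extend_substructure hU hrfg hC g₂
  refine ⟨ψ.toHom.comp g₁, fun z => ?_⟩
  have hz : g₁ (u z) = g₂ ((Hom.codRestrict k.range k fun c => k.mem_range_self c) z) :=
    congr_fun (congr_arg DFunLike.coe hsq) z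
  calc ψ.toHom.comp g₁ (u z) = ψ (g₁ (u z)) := rfl
    _ = ψ (g₂ ((Hom.codRestrict k.range k fun c => k.mem_range_self c) z)) := by rw [hz]
    _ = k z := hψ _

/-- Pushouts in a strict Fraisse class, with legs upgraded to embeddings. -/
theorem pushout_package (hK : IsStrictFraisse L K) {A B₁ B₂ : Bundled.{w} L.Structure}
    (hA : A ∈ K) (h1 : B₁ ∈ K) (h2 : B₂ ∈ K) (f₁ : ↥A ↪[L] ↥B₁) (f₂ : ↥A ↪[L] ↥B₂) :
    ∃ (C : Bundled.{w} L.Structure) (g₁ : ↥B₁ ↪[L] ↥C) (g₂ : ↥B₂ ↪[L] ↥C),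
      C ∈ K ∧ (∀ a, g₁ (f₁ a) = g₂ (f₂ a)) ∧
      ∀ (D : Bundled.{w} L.Structure), InBar L K D → ∀ (k₁ : ↥B₁ →[L] ↥D) (k₂ : ↥B₂ →[L] ↥D),
        (∀ a, k₁ (f₁ a) = k₂ (f₂ a)) →
        ∃ m : ↥C →[L] ↥D, (∀ b, m (g₁ b) = k₁ b) ∧ (∀ b, m (g₂ b) = k₂ b) := by
  obtain ⟨C, g₁, g₂, hC, hsq, huniv⟩ := hK.2 A B₁ B₂ hA h1 h2 f₁ f₂
  obtain ⟨R, n₁, n₂, hR, hnsq⟩ := hK.1.amalgamation A B₁ B₂ f₁ f₂ hA h1 h2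
  have hnsq' : n₁.toHom.comp f₁.toHom = n₂.toHom.comp f₂.toHom := by
    ext a
    exact congr_fun (congr_arg DFunLike.coe hnsq) a
  obtain ⟨m, ⟨hm1, hm2⟩, -⟩ := huniv R (inBar_of_mem hK.1 hR) n₁.toHom n₂.toHom hnsq'
  have hm1' : ∀ b, m (g₁ b) = n₁ b := fun b => congr_fun (congr_arg DFunLike.coe hm1) b
  have hm2' : ∀ b, m (g₂ b) = n₂ b := fun b => congr_fun (congr_arg DFunLike.coe hm2) b
  refine ⟨C, Hom.toEmbeddingOfComp g₁ n₁ m hm1', Hom.toEmbeddingOfComp g₂ n₂ m hm2', hC,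
    fun a => congr_fun (congr_arg DFunLike.coe hsq) a, fun D hD k₁ k₂ hcomm => ?_⟩
  obtain ⟨m', ⟨hma, hmb⟩, -⟩ := huniv D hD k₁ k₂ (by ext a; exact hcomm a)
  exact ⟨m', fun b => congr_fun (congr_arg DFunLike.coe hma) b,
    fun b => congr_fun (congr_arg DFunLike.coe hmb) b⟩

/-- The age of the square of the Fraisse limit is contained in `K`. -/
theorem age_sq_subset (hK : IsStrictFraisse L K) (hU : IsFraisseLimit K U)
    (hprod : ∀ A B : Bundled.{w} L.Structure, A ∈ K → B ∈ K →
      (Bundled.of (↥A × ↥B) : Bundled.{w} L.Structure) ∈ K) :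
    L.age (Fin 2 → U) ⊆ K := by
  rintro N ⟨hNfg, ⟨e⟩⟩
  classical
  let φ : Fin 2 → (↥N →[L] U) := fun i => (projHom (L := L) 1 i).comp e.toHom
  have hφ : ∀ i n, φ i n = e n i := fun i n => rfl
  have hrfg : ∀ i, (φ i).range.FG := fun i => hNfg.range _
  have hmem : ∀ i, (⟨↥(φ i).range, inferInstance⟩ : Bundled L.Structure) ∈ K := fun i =>
    hU.age ▸ age.fg_substructure (hrfg i)
  have hPmem := hprod _ _ (hmem 0) (hmem 1)
  refine hK.1.hereditary _ hPmem ⟨hNfg, ⟨?_⟩⟩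
  refine ⟨⟨fun n => (⟨φ 0 n, (φ 0).mem_range_self n⟩, ⟨φ 1 n, (φ 1).mem_range_self n⟩), ?_⟩,
    ?_, ?_⟩
  · intro a b hab
    apply e.injective
    funext j
    have h0 : φ 0 a = φ 0 b := congr_arg (fun p => (p.1 : U)) hab
    have h1 : φ 1 a = φ 1 b := congr_arg (fun p => (p.2 : U)) hab
    fin_cases j
    · exact h0
    · exact h1
  · intro n f x
    refine Prod.ext (Subtype.ext ?_) (Subtype.ext ?_)
    · exact (φ 0).map_fun' f x
    · exact (φ 1).map_fun' f x
  · intro n r x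
    have he := e.map_rel' r x
    constructor
    · rintro ⟨h0, h1⟩
      refine he.1 ?_
      intro j
      fin_cases j
      · exact h0
      · exact h1
    · intro h
      have h' := he.2 h
      exact ⟨h' 0, h' 1⟩

end Hap


/-! ### Limits of towers -/

section Limits

variable {L : FirstOrder.Language.{u, v}} {U : Type w} [L.Structure U]

theorem towerLimitHom (P : ℕ → Bundled.{w} L.Structure) (ε : ∀ n, ↥(P n) ↪[L] ↥(P (n + 1)))
    (ω : ∀ n, ↥(P n) ↪[L] U) (hω : ∀ n p, ω (n + 1) (ε n p) = ω n p)
    (hcov : ∀ x : U, ∃ (n : ℕ) (p : ↥(P n)), ω n p = x)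
    (k : ∀ n, ↥(P n) →[L] U) (hk : ∀ n p, k (n + 1) (ε n p) = k n p) :
    ∃ H : U →[L] U, ∀ n p, H (ω n p) = k n p := by
  classical
  have hup : ∀ m N, m ≤ N → ∀ p : ↥(P m), ∃ q : ↥(P N), ω N q = ω m p ∧ k N q = k m p := by
    intro m N hmN
    induction N, hmN using Nat.le_induction with
    | base => exact fun p => ⟨p, rfl, rfl⟩
    | succ n hn ih =>
      intro p
      obtain ⟨q, h1, h2⟩ := ih p
      exact ⟨ε n q, by rw [hω]; exact h1, by rw [hk]; exact h2⟩
  have welldef : ∀ m n (p : ↥(P m)) (q : ↥(P n)), ω m p = ω n q → k m p = k n q := by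
    intro m n p q hpq
    rcases le_total m n with h | h
    · obtain ⟨q', h1, h2⟩ := hup m n h p
      have : q' = q := (ω n).injective (by rw [h1, hpq])
      rw [← h2, this]
    · obtain ⟨p', h1, h2⟩ := hup n m h q
      have : p' = p := (ω m).injective (by rw [h1, hpq])
      rw [← h2, this]
  let H0 : U → U := fun x => k (hcov x).choose (hcov x).choose_spec.choose
  have key : ∀ n (p : ↥(P n)), H0 (ω n p) = k n p := by
    intro n p
    exact welldef _ _ _ _ ((hcov (ω n p)).choose_spec.choose_spec)
  have stage : ∀ (nn : ℕ) (x : Fin nn → U), ∃ (N : ℕ) (q : Fin nn → ↥(P N)),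
      ∀ i, ω N (q i) = x i := by
    intro nn x
    let g : Fin nn → ℕ := fun i => (hcov (x i)).choose
    refine ⟨Finset.univ.sup g, ?_⟩
    have : ∀ i, ∃ p : ↥(P (Finset.univ.sup g)), ω _ p = x i := by
      intro i
      obtain ⟨q, h1, -⟩ := hup (g i) (Finset.univ.sup g)
        (Finset.le_sup (Finset.mem_univ i)) (hcov (x i)).choose_spec.choose
      exact ⟨q, by rw [h1]; exact (hcov (x i)).choose_spec.choose_spec⟩
    choose q hq using this
    exact ⟨q, hq⟩
  refine ⟨⟨H0, ?_, ?_⟩, key⟩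
  · intro nn f x
    obtain ⟨N, q, hq⟩ := stage nn x
    have hx : x = fun i => ω N (q i) := by funext i; exact (hq i).symm
    rw [hx]
    have h1 : Structure.funMap f (fun i => ω N (q i)) = ω N (Structure.funMap f q) :=
      ((ω N).map_fun' f q).symm
    rw [h1, key]
    have h2 : k N (Structure.funMap f q) = Structure.funMap f (fun i => k N (q i)) :=
      (k N).map_fun' f q
    rw [h2]
    congr 1
    funext i
    exact (key N (q i)).symm
  · intro nn r x hx
    obtain ⟨N, q, hq⟩ := stage nn x
    have hx' : x = fun i => ω N (q i) := by funext i; exact (hq i).symm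
    rw [hx'] at hx
    have hq' : Structure.RelMap r q := ((ω N).map_rel' r q).1 hx
    have : Structure.RelMap r (fun i => k N (q i)) := (k N).map_rel' r q hq'
    have hHx : (H0 ∘ x) = fun i => k N (q i) := by
      funext i
      rw [Function.comp_apply, ← hq i, key]
    rw [hHx]
    exact this

theorem chainLimitEmb {A : Type w} [L.Structure A] (An : ℕ → L.Substructure A)
    (hmono : ∀ n, An n ≤ An (n + 1)) (hexh : ∀ a : A, ∃ n, a ∈ An n)
    (ψ : ∀ n, (↥(An n) : Type w) ↪[L] U)
    (hψ : ∀ n (y : ↥(An n)), ψ (n + 1) (Substructure.inclusion (hmono n) y) = ψ n y) :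
    ∃ j : A ↪[L] U, ∀ (n : ℕ) (y : ↥(An n)), j (y : A) = ψ n y := by
  classical
  have hM : Monotone An := monotone_nat_of_le_succ hmono
  have hup : ∀ m N (h : m ≤ N) (a : A) (ha : a ∈ An m), ψ N ⟨a, hM h ha⟩ = ψ m ⟨a, ha⟩ := by
    intro m N h
    induction N, h using Nat.le_induction with
    | base => intro a ha; rfl
    | succ n hn ih =>
      intro a ha
      have h1 : (⟨a, hM (Nat.le_succ_of_le hn) ha⟩ : ↥(An (n + 1))) =
          Substructure.inclusion (hmono n) ⟨a, hM hn ha⟩ := by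
        apply Subtype.ext
        rfl
      rw [h1, hψ]
      exact ih a ha
  have welldef : ∀ m n (a : A) (ham : a ∈ An m) (han : a ∈ An n),
      ψ m ⟨a, ham⟩ = ψ n ⟨a, han⟩ := by
    intro m n a ham han
    rcases le_total m n with h | h
    · rw [← hup m n h a ham]
    · rw [← hup n m h a han]
  let j0 : A → U := fun a => ψ (hexh a).choose ⟨a, (hexh a).choose_spec⟩
  have key : ∀ (n : ℕ) (a : A) (ha : a ∈ An n), j0 a = ψ n ⟨a, ha⟩ := by
    intro n a ha
    exact welldef _ _ _ _ _
  have stage : ∀ (nn : ℕ) (x : Fin nn → A), ∃ N : ℕ, ∀ i, x i ∈ An N := by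
    intro nn x
    let g : Fin nn → ℕ := fun i => (hexh (x i)).choose
    exact ⟨Finset.univ.sup g, fun i => hM (Finset.le_sup (Finset.mem_univ i))
      (hexh (x i)).choose_spec⟩
  refine ⟨⟨⟨j0, ?_⟩, ?_, ?_⟩, fun n y => key n (y : A) y.2⟩
  · intro a b hab
    obtain ⟨Na, hNa⟩ := hexh a
    obtain ⟨Nb, hNb⟩ := hexh b
    have ha' : j0 a = ψ (max Na Nb) ⟨a, hM (le_max_left _ _) hNa⟩ := key _ _ _
    have hb' : j0 b = ψ (max Na Nb) ⟨b, hM (le_max_right _ _) hNb⟩ := key _ _ _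
    have := (ψ (max Na Nb)).injective (ha' ▸ hb' ▸ hab)
    exact congr_arg Subtype.val this
  · intro nn f x
    show j0 (Structure.funMap f x) = Structure.funMap f (j0 ∘ x)
    obtain ⟨N, hN⟩ := stage nn x
    have hfm : Structure.funMap f x ∈ An N := (An N).fun_mem f _ hN
    have h1 : j0 (Structure.funMap f x) = ψ N ⟨Structure.funMap f x, hfm⟩ := key _ _ _
    have h2 : (⟨Structure.funMap f x, hfm⟩ : ↥(An N)) =
        Structure.funMap f (fun i => ⟨x i, hN i⟩) := by
      apply Subtype.ext
      rfl
    rw [h1, h2]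
    rw [show (ψ N) (Structure.funMap f fun i => (⟨x i, hN i⟩ : ↥(An N))) =
      Structure.funMap f (⇑(ψ N) ∘ fun i => ⟨x i, hN i⟩) from (ψ N).map_fun' f _]
    congr 1
    funext i
    exact (key N (x i) (hN i)).symm
  · intro nn r x
    show Structure.RelMap r (j0 ∘ x) ↔ Structure.RelMap r x
    obtain ⟨N, hN⟩ := stage nn x
    have hx : (j0 ∘ x) = ⇑(ψ N) ∘ (fun i => ⟨x i, hN i⟩) := by
      funext i
      exact key N (x i) (hN i)
    have h2 := (ψ N).map_rel' r (fun i => ⟨x i, hN i⟩)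
    rw [hx]
    exact h2

end Limits


/-! ### The recursive tower construction -/

theorem depChain {X : ℕ → Type*} (R : ∀ n, X n → X (n + 1) → Prop) (x0 : X 0)
    (h : ∀ n (x : X n), ∃ y, R n x y) :
    ∃ g : ∀ n, X n, g 0 = x0 ∧ ∀ n, R n (g n) (g (n + 1)) :=
  ⟨fun n => Nat.rec x0 (fun n x => (h n x).choose) n, rfl, fun n => (h n _).choose_spec⟩

/-- An equivalence obtained from a surjective embedding. -/
noncomputable def embEquivOfSurjective {L : FirstOrder.Language.{u, v}} {M N : Type w} [L.Structure M]
    [L.Structure N] (e : M ↪[L] N) (h : Function.Surjective ⇑e) : M ≃[L] N where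
  toFun := e
  invFun := fun n => (h n).choose
  left_inv := fun m => e.injective ((h (e m)).choose_spec)
  right_inv := fun n => (h n).choose_spec
  map_fun' := e.map_fun'
  map_rel' := e.map_rel'

section TowerCons

variable {L : FirstOrder.Language.{u, v}} [Countable (Σ l, L.Functions l)]
variable {K : Set (Bundled.{w} L.Structure)} {U : Type w} [L.Structure U] [Countable U]

structure MTower (L : FirstOrder.Language.{u, v}) (K : Set (Bundled.{w} L.Structure))
    (U : Type w) [L.Structure U] {A : Type w} [L.Structure A]
    {r : ℕ} (f : Fin r → (A →[L] U)) (An : L.Substructure A) where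
  P : Bundled.{w} L.Structure
  mem : P ∈ K
  ω : (↥P : Type w) ↪[L] U
  emb : (↥An : Type w) ↪[L] ↥P
  h : Fin r → ((↥P : Type w) →[L] U)
  hinv : ∀ (i : Fin r) (y : ↥An), h i (emb y) = f i (y : A)

theorem mtower_step (hK : IsStrictFraisse L K) (hU : IsFraisseLimit K U) (hhap : HAP L K)
    {A : Type w} [L.Structure A] (hage : L.age A ⊆ K)
    {r : ℕ} {f : Fin r → (A →[L] U)} {An An' : L.Substructure A} (hle : An ≤ An')
    (hfg : An.FG) (hfg' : An'.FG) (s : MTower L K U f An) (x0 : U) :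
    ∃ (s' : MTower L K U f An') (ε : ↥s.P ↪[L] ↥s'.P),
      (∀ p, s'.ω (ε p) = s.ω p) ∧
      (∀ y : ↥An, ε (s.emb y) = s'.emb (Substructure.inclusion hle y)) ∧
      (∃ p : ↥s'.P, s'.ω p = x0) ∧
      (∀ i p, s'.h i (ε p) = s.h i p) ∧
      (∀ (g : (↥An' : Type w) →[L] U) (kk : ↥s.P →[L] U),
        (∀ y : ↥An, kk (s.emb y) = g (Substructure.inclusion hle y)) →
        ∃ m : ↥s'.P →[L] U, (∀ y, m (s'.emb y) = g y) ∧ (∀ p, m (ε p) = kk p)) := by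
  classical
  have hAn : (⟨↥An, inferInstance⟩ : Bundled L.Structure) ∈ K :=
    hage (age.fg_substructure hfg)
  have hAn' : (⟨↥An', inferInstance⟩ : Bundled L.Structure) ∈ K :=
    hage (age.fg_substructure hfg')
  obtain ⟨Q, q₁, q₂, hQ, hsq, huniv⟩ := pushout_package hK hAn hAn' s.mem
    (Substructure.inclusion hle) s.emb
  haveI : Nonempty ((↥Q : Type w) ↪[L] U) := (hU.age.symm ▸ hQ : Q ∈ L.age U).2
  obtain ⟨ωQ, hωQ⟩ := hU.ultrahomogeneous.extend_embedding (hK.1.FG s.P s.mem) s.ω q₂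
  have hωQ' : ∀ p, ωQ (q₂ p) = s.ω p := fun p =>
    (congr_fun (congr_arg DFunLike.coe hωQ) p).symm
  set S' : L.Substructure U := ωQ.toHom.range ⊔ Substructure.closure L {x0} with hS'
  have hS'fg : S'.FG := ((hK.1.FG Q hQ).range ωQ.toHom).sup (Substructure.fg_closure_singleton _)
  have hP'mem : (⟨↥S', inferInstance⟩ : Bundled L.Structure) ∈ K :=
    hU.age ▸ age.fg_substructure hS'fg
  have hran : ∀ c : ↥Q, ωQ c ∈ S' := fun c =>
    (le_sup_left : ωQ.toHom.range ≤ S') (ωQ.toHom.mem_range_self c)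
  let εQ : (↥Q : Type w) ↪[L] ↥S' := FirstOrder.Language.Embedding.codRestrict S' ωQ hran
  have hεQ : ∀ z : ↥Q, (S'.subtype (εQ z) : U) = ωQ z := fun z => rfl
  -- the lift property
  have hlift : ∀ (g : (↥An' : Type w) →[L] U) (kk : ↥s.P →[L] U),
      (∀ y : ↥An, kk (s.emb y) = g (Substructure.inclusion hle y)) →
      ∃ m : (↥S' : Type w) →[L] U, (∀ y, m (εQ (q₁ y)) = g y) ∧ (∀ p, m (εQ (q₂ p)) = kk p) := by
    intro g kk hc
    have hDbar : InBar L K U := ⟨inferInstance, le_of_eq hU.age⟩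
    obtain ⟨m₀, hm₁, hm₂⟩ := huniv (Bundled.of U) hDbar g kk (fun a => (hc a).symm)
    obtain ⟨m, hm⟩ := hom_extend hK.1 hU hhap hQ hP'mem εQ m₀
    exact ⟨m, fun y => (hm (q₁ y)).trans (hm₁ y), fun p => (hm (q₂ p)).trans (hm₂ p)⟩
  -- the new h homomorphisms
  have hh : ∀ i : Fin r, ∃ m : (↥S' : Type w) →[L] U,
      (∀ y, m (εQ (q₁ y)) = f i ((An'.subtype y : A))) ∧ (∀ p, m (εQ (q₂ p)) = s.h i p) := by
    intro i
    refine hlift ((f i).comp An'.subtype.toHom) (s.h i) (fun y => ?_)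
    rw [s.hinv i y]
    rfl
  choose hfun hspec1 hspec2 using hh
  refine ⟨⟨⟨↥S', inferInstance⟩, hP'mem, S'.subtype, εQ.comp q₁, hfun, fun i y => hspec1 i y⟩,
    εQ.comp q₂, fun p => ?_, fun y => ?_, ?_, fun i p => hspec2 i p, fun g kk hc => ?_⟩
  · exact (hεQ (q₂ p)).trans (hωQ' p)
  · show εQ (q₂ (s.emb y)) = εQ (q₁ (Substructure.inclusion hle y))
    exact congr_arg εQ (hsq y).symm
  · refine ⟨⟨x0, ?_⟩, rfl⟩
    exact (le_sup_right : Substructure.closure L {x0} ≤ S')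
      (Substructure.subset_closure (Set.mem_singleton x0))
  · obtain ⟨m, hm1, hm2⟩ := hlift g kk hc
    exact ⟨m, hm1, hm2⟩

end TowerCons


section LemmaM

variable {L : FirstOrder.Language.{u, v}} [Countable (Σ l, L.Functions l)]
variable {K : Set (Bundled.{w} L.Structure)} {U : Type w} [L.Structure U] [Countable U]

/-- The main construction: embed `A` into `U`, extending finitely many homomorphisms `A → U`
to endomorphisms of `U`, and semiconjugating an endomorphism `d` of `A`. -/
theorem lemmaM (hK : IsStrictFraisse L K) (hU : IsFraisseLimit K U) (hhap : HAP L K)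
    [Nonempty U] (A : Type w) [L.Structure A] [Countable A] (hage : L.age A ⊆ K)
    {r : ℕ} (f : Fin r → (A →[L] U)) (d : A →[L] A) :
    ∃ (j : A ↪[L] U) (H : Fin r → (U →[L] U)) (Δ : U →[L] U),
      (∀ (i : Fin r) (a : A), H i (j a) = f i a) ∧ ∀ a : A, Δ (j a) = j (d a) := by
  classical
  rcases isEmpty_or_nonempty A with hA | hA
  · obtain ⟨j⟩ := nonempty_embedding_of_age_subset hU A hage
    exact ⟨j, fun _ => Hom.id L U, Hom.id L U, fun i a => isEmptyElim a, fun a => isEmptyElim a⟩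
  obtain ⟨α, hα⟩ := exists_surjective_nat A
  obtain ⟨xen, hxen⟩ := exists_surjective_nat U
  -- the substructure chain
  let Sset : ℕ → Set A := fun n => Nat.rec (∅ : Set A) (fun n s => (s ∪ {α n}) ∪ ⇑d '' s) n
  have hSmono : ∀ n, Sset n ⊆ Sset (n + 1) := fun n =>
    (Set.subset_union_left).trans Set.subset_union_left
  have hSfin : ∀ n, (Sset n).Finite := by
    intro n
    induction n with
    | zero => exact Set.finite_empty
    | succ n ih => exact (ih.union (Set.finite_singleton _)).union (ih.image _)
  let An : ℕ → L.Substructure A := fun n => Substructure.closure L (Sset n)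
  have hmono : ∀ n, An n ≤ An (n + 1) := fun n =>
    Substructure.closure_le.2 ((hSmono n).trans Substructure.subset_closure)
  have hfg : ∀ n, (An n).FG := fun n => Substructure.fg_closure (hSfin n)
  have hexh : ∀ a : A, ∃ n, a ∈ An n := by
    intro a
    obtain ⟨n, rfl⟩ := hα a
    exact ⟨n + 1, Substructure.subset_closure (Or.inl (Or.inr rfl))⟩
  have hd : ∀ n (a : A), a ∈ An n → d a ∈ An (n + 1) := by
    intro n a ha
    have h1 : d a ∈ (Substructure.closure L (Sset n)).map d := Substructure.mem_map.2 ⟨a, ha, rfl⟩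
    rw [Substructure.map_closure] at h1
    exact (Substructure.closure_le.2
      (fun x hx => Substructure.subset_closure (Or.inr hx))) h1
  let dRes : ∀ n, (↥(An n) : Type w) →[L] ↥(An (n + 1)) := fun n =>
    Hom.codRestrict (An (n + 1)) (d.comp (An n).subtype.toHom) (fun y => hd n y y.2)
  -- base tower
  have hbase_mem : (⟨↥(An 0), inferInstance⟩ : Bundled L.Structure) ∈ K :=
    hage (age.fg_substructure (hfg 0))
  obtain ⟨ω0⟩ : Nonempty ((↥(An 0) : Type w) ↪[L] U) :=
    (hU.age.symm ▸ hbase_mem : _ ∈ L.age U).2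
  let base : MTower L K U f (An 0) :=
    ⟨⟨↥(An 0), inferInstance⟩, hbase_mem, ω0, Embedding.refl L ↥(An 0),
      fun i => (f i).comp (An 0).subtype.toHom, fun i y => rfl⟩
  -- the chain of towers
  obtain ⟨g, hg0, hR⟩ := depChain (X := fun n => MTower L K U f (An n))
    (R := fun n s s' => ∃ ε : ↥s.P ↪[L] ↥s'.P,
      (∀ p, s'.ω (ε p) = s.ω p) ∧
      (∀ y : ↥(An n), ε (s.emb y) = s'.emb (Substructure.inclusion (hmono n) y)) ∧
      (∃ p : ↥s'.P, s'.ω p = xen n) ∧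
      (∀ i p, s'.h i (ε p) = s.h i p) ∧
      (∀ (gg : (↥(An (n + 1)) : Type w) →[L] U) (kk : ↥s.P →[L] U),
        (∀ y : ↥(An n), kk (s.emb y) = gg (Substructure.inclusion (hmono n) y)) →
        ∃ m : ↥s'.P →[L] U, (∀ y, m (s'.emb y) = gg y) ∧ (∀ p, m (ε p) = kk p)))
    base (fun n s => mtower_step hK hU hhap hage (hmono n) (hfg n) (hfg (n + 1)) s (xen n))
  choose ε hω hemb hcov hh hlift using hR
  have hcovU : ∀ x : U, ∃ (n : ℕ) (p : ↥((g n).P)), (g n).ω p = x := by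
    intro x
    obtain ⟨n, rfl⟩ := hxen x
    obtain ⟨p, hp⟩ := hcov n
    exact ⟨n + 1, p, hp⟩
  -- the limit embedding j
  have hψ : ∀ n (y : ↥(An n)),
      ((g (n + 1)).ω.comp (g (n + 1)).emb) (Substructure.inclusion (hmono n) y) =
        ((g n).ω.comp (g n).emb) y := by
    intro n y
    show (g (n + 1)).ω ((g (n + 1)).emb (Substructure.inclusion (hmono n) y)) =
      (g n).ω ((g n).emb y)
    rw [← hemb n y, hω n]
  obtain ⟨j, hj⟩ := chainLimitEmb An hmono hexh (fun n => (g n).ω.comp (g n).emb) hψ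
  have hj' : ∀ (n : ℕ) (a : A) (ha : a ∈ An n), j a = (g n).ω ((g n).emb ⟨a, ha⟩) :=
    fun n a ha => hj n ⟨a, ha⟩
  -- the limit endomorphisms H i
  have hHi : ∀ i : Fin r, ∃ H : U →[L] U, ∀ n p, H ((g n).ω p) = (g n).h i p := fun i =>
    towerLimitHom (fun n => (g n).P) ε (fun n => (g n).ω) hω hcovU
      (fun n => (g n).h i) (fun n p => hh n i p)
  choose H hH using hHi
  -- the delta chain
  have hsurj : Function.Surjective ⇑(g 0).emb := by
    rw [hg0]
    exact fun y => ⟨y, rfl⟩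
  let tgt : ∀ n, (↥(An n) : Type w) →[L] U := fun n =>
    (g (n + 1)).ω.toHom.comp ((g (n + 1)).emb.toHom.comp (dRes n))
  let eqv := embEquivOfSurjective (g 0).emb hsurj
  have inv0 : ∀ y : ↥(An 0), ((tgt 0).comp eqv.symm.toHom) ((g 0).emb y) = tgt 0 y := by
    intro y
    show tgt 0 (eqv.symm ((g 0).emb y)) = tgt 0 y
    exact congrArg ⇑(tgt 0) (eqv.left_inv y)
  obtain ⟨δc, hδ0, hδR⟩ := depChain
    (X := fun n => {kk : (↥((g n).P) : Type w) →[L] U //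
      ∀ y : ↥(An n), kk ((g n).emb y) = tgt n y})
    (R := fun n kk kk' => ∀ p, kk'.1 (ε n p) = kk.1 p)
    ⟨(tgt 0).comp eqv.symm.toHom, inv0⟩
    (fun n kk => by
      have hcompat : ∀ y : ↥(An n), kk.1 ((g n).emb y) =
          tgt (n + 1) (Substructure.inclusion (hmono n) y) := by
        intro y
        rw [kk.2 y]
        show (g (n + 1)).ω ((g (n + 1)).emb (dRes n y)) =
          (g (n + 2)).ω ((g (n + 2)).emb (dRes (n + 1) (Substructure.inclusion (hmono n) y)))
        have h2 : dRes (n + 1) (Substructure.inclusion (hmono n) y) =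
            Substructure.inclusion (hmono (n + 1)) (dRes n y) := Subtype.ext rfl
        rw [h2, ← hemb (n + 1), hω (n + 1)]
      obtain ⟨m, hm1, hm2⟩ := hlift n (tgt (n + 1)) kk.1 hcompat
      exact ⟨⟨m, fun y => hm1 y⟩, hm2⟩)
  obtain ⟨Δ, hΔ⟩ := towerLimitHom (fun n => (g n).P) ε (fun n => (g n).ω) hω hcovU
    (fun n => (δc n).1) hδR
  -- conclusion
  refine ⟨j, H, Δ, ?_, ?_⟩
  · intro i a
    obtain ⟨n, ha⟩ := hexh a
    rw [hj' n a ha, hH i n, (g n).hinv i]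
  · intro a
    obtain ⟨n, ha⟩ := hexh a
    rw [hj' n a ha, hΔ n, (δc n).2 ⟨a, ha⟩]
    show (g (n + 1)).ω ((g (n + 1)).emb (dRes n ⟨a, ha⟩)) = j (d a)
    have h2 : dRes n ⟨a, ha⟩ = ⟨d a, hd n a ha⟩ := Subtype.ext rfl
    rw [h2]
    exact (hj' (n + 1) (d a) (hd n a ha)).symm

end LemmaM


/-! ### Clone-side constructions -/

section CloneSide

variable {L : FirstOrder.Language.{u, v}} {U : Type w} [L.Structure U]

/-- The unary operation associated to an endomorphism. -/
def opOfEnd (h : U →[L] U) : Ops U := ⟨0, fun x => h (x 0)⟩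

theorem opOfEnd_mem_polSet (h : U →[L] U) : opOfEnd h ∈ PolSet L U :=
  ⟨h.comp (projHom 0 0), rfl⟩

theorem opOfEnd_comp_mem {S : Set (Ops U)} (hS : IsClone U S) {a b : U →[L] U}
    (h1 : opOfEnd a ∈ S) (h2 : opOfEnd b ∈ S) : opOfEnd (a.comp b) ∈ S :=
  hS.comp 0 0 (fun x => a (x 0)) (fun _ => fun x => b (x 0)) h1 (fun _ => h2)

/-- Iterated pairing: an embedding of every finite power of `U` built from a binary one. -/
def ebarF (e : (Fin 2 → U) → U) : (k : ℕ) → (Fin (k + 1) → U) → U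
  | 0 => fun x => x 0
  | (k + 1) => fun x => e (fun i : Fin 2 => if i = 0 then x 0 else ebarF e k (fun j => x j.succ))

theorem ebarF_mem {e : (Fin 2 → U) → U} {S : Set (Ops U)} (hS : IsClone U S)
    (he : (⟨1, e⟩ : Ops U) ∈ S) : ∀ k, (⟨k, ebarF e k⟩ : Ops U) ∈ S := by
  intro k
  induction k with
  | zero => exact hS.proj 0 0
  | succ k ih =>
    have htail : (⟨k + 1, fun x : Fin (k + 2) → U => ebarF e k (fun j => x j.succ)⟩ : Ops U)
        ∈ S :=
      hS.comp k (k + 1) (ebarF e k) (fun j => fun x => x j.succ) ih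
        (fun j => hS.proj (k + 1) j.succ)
    have hcomp := hS.comp 1 (k + 1) e
      (fun i => if i = 0 then (fun x : Fin (k + 2) → U => x 0)
        else (fun x => ebarF e k (fun j => x j.succ))) he ?_
    · have heq : (fun (x : Fin (k + 2) → U) => e (fun i =>
          (if i = 0 then (fun x : Fin (k + 2) → U => x 0)
            else (fun x => ebarF e k (fun j => x j.succ))) x)) = ebarF e (k + 1) := by
        funext x
        show e _ = e _
        congr 1
        funext i
        by_cases h : i = 0
        · subst h; simp
        · simp [h]
      rw [heq] at hcomp
      exact hcomp
    · intro i
      by_cases h : i = 0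
      · subst h
        exact hS.proj (k + 1) 0
      · show (⟨k + 1, if i = 0 then (fun x : Fin (k + 2) → U => x 0)
          else fun x => ebarF e k fun j => x j.succ⟩ : Ops U) ∈ S
        rw [if_neg h]
        exact htail

/-- The recovery endomorphisms. -/
def rcvHom (p q : U →[L] U) : (k : ℕ) → Fin (k + 1) → (U →[L] U)
  | 0 => fun _ => Hom.id L U
  | (k + 1) => fun i => Fin.cases p (fun i' => (rcvHom p q k i').comp q) i

theorem rcvHom_spec {e : (Fin 2 → U) ↪[L] U} {p q : U →[L] U}
    (hp : ∀ v : Fin 2 → U, p (e v) = v 0) (hq : ∀ v : Fin 2 → U, q (e v) = v 1) :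
    ∀ (k : ℕ) (x : Fin (k + 1) → U) (i : Fin (k + 1)),
      rcvHom p q k i (ebarF (⇑e) k x) = x i := by
  intro k
  induction k with
  | zero =>
    intro x i
    rw [Fin.eq_zero i]
    rfl
  | succ k ih =>
    intro x i
    induction i using Fin.cases with
    | zero =>
      show p (ebarF (⇑e) (k + 1) x) = x 0
      rw [show ebarF (⇑e) (k + 1) x = e (fun i : Fin 2 => if i = 0 then x 0
        else ebarF (⇑e) k (fun j => x j.succ)) from rfl, hp]
      simp
    | succ i' =>
      show rcvHom p q k i' (q (ebarF (⇑e) (k + 1) x)) = x i'.succ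
      rw [show ebarF (⇑e) (k + 1) x = e (fun i : Fin 2 => if i = 0 then x 0
        else ebarF (⇑e) k (fun j => x j.succ)) from rfl, hq]
      rw [show (if (1 : Fin 2) = 0 then x 0 else ebarF (⇑e) k (fun j => x j.succ)) =
        ebarF (⇑e) k (fun j => x j.succ) from if_neg (by decide)]
      exact ih _ i'

end CloneSide


/-! ### The Sierpiński-type property of the polymorphism clone -/

section Sierpinski

variable {L : FirstOrder.Language.{u, v}} [Countable (Σ l, L.Functions l)]
variable {K : Set (Bundled.{w} L.Structure)} {U : Type w} [L.Structure U] [Countable U]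

theorem sierpinski (hK : IsStrictFraisse L K) (hU : IsFraisseLimit K U) (hhap : HAP L K)
    [Nonempty U]
    (hprod : ∀ A B : Bundled.{w} L.Structure, A ∈ K → B ∈ K →
      (Bundled.of (↥A × ↥B) : Bundled.{w} L.Structure) ∈ K)
    (hcoprod : CoproductOfCopiesExists L K U)
    (ops : ℕ → Ops U) (hops : ∀ n, ops n ∈ PolSet L U) :
    ∃ G : Set (Ops U), G.Finite ∧ G ⊆ PolSet L U ∧ ∀ n, ops n ∈ cloneGen U G := by
  classical
  choose F hF using hops
  -- the pairing embedding and its recovery endomorphisms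
  have hageSq : L.age (Fin 2 → U) ⊆ K := age_sq_subset hK hU hprod
  obtain ⟨jsq, P2, _, hP2, -⟩ := lemmaM hK hU hhap (Fin 2 → U) hageSq
    (fun i : Fin 2 => projHom 1 i) (Hom.id L _)
  have hp : ∀ v : Fin 2 → U, P2 0 (jsq v) = v 0 := fun v => hP2 0 v
  have hq : ∀ v : Fin 2 → U, P2 1 (jsq v) = v 1 := fun v => hP2 1 v
  -- the endomorphism factors
  let gend : ℕ → (U →[L] U) := fun n =>
    (F n).comp (tupleHom (fun i => rcvHom (P2 0) (P2 1) (ops n).1 i))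
  have hgend : ∀ n (x : Fin ((ops n).1 + 1) → U),
      gend n (ebarF (⇑jsq) (ops n).1 x) = (ops n).2 x := by
    intro n x
    show F n (fun i => rcvHom (P2 0) (P2 1) (ops n).1 i (ebarF (⇑jsq) (ops n).1 x)) = _
    have : (fun i => rcvHom (P2 0) (P2 1) (ops n).1 i (ebarF (⇑jsq) (ops n).1 x)) = x := by
      funext i
      exact rcvHom_spec hp hq (ops n).1 x i
    rw [this, hF n]
  -- compress the endomorphisms through the coproduct
  obtain ⟨Cb, ins, hCbar, hCuniv⟩ := hcoprod
  have hUbar : InBar L K U := ⟨inferInstance, le_of_eq hU.age⟩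
  obtain ⟨t, ht, -⟩ := hCuniv (Bundled.of U) hUbar gend
  obtain ⟨dC, hdC, -⟩ := hCuniv Cb hCbar (fun i => ins (i + 1))
  haveI : Countable ↥Cb := hCbar.1
  obtain ⟨jC, TC, δ, hTC, hδ⟩ := lemmaM hK hU hhap ↥Cb hCbar.2 (fun _ : Fin 1 => t) dC
  let τ : U →[L] U := TC 0
  let β : U →[L] U := jC.toHom.comp (ins 0)
  have htpoint : ∀ (i : ℕ) (u : U), (t : (↥Cb : Type w) →[L] U) (ins i u) = gend i u :=
    fun i u => congr_fun (congr_arg DFunLike.coe (ht i)) u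
  have hdpoint : ∀ i c, dC (ins i c) = ins (i + 1) c := fun i c =>
    congr_fun (congr_arg DFunLike.coe (hdC i)) c
  -- the generating set
  let G : Set (Ops U) := insert (opOfEnd τ) (insert (opOfEnd δ) (insert (opOfEnd β)
    {(⟨1, ⇑jsq⟩ : Ops U)}))
  have hτG : opOfEnd τ ∈ cloneGen U G := subset_cloneGen G (Set.mem_insert _ _)
  have hδG : opOfEnd δ ∈ cloneGen U G :=
    subset_cloneGen G (Set.mem_insert_of_mem _ (Set.mem_insert _ _))
  have hβG : opOfEnd β ∈ cloneGen U G :=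
    subset_cloneGen G (Set.mem_insert_of_mem _ (Set.mem_insert_of_mem _ (Set.mem_insert _ _)))
  have heG : (⟨1, ⇑jsq⟩ : Ops U) ∈ cloneGen U G :=
    subset_cloneGen G (Set.mem_insert_of_mem _ (Set.mem_insert_of_mem _
      (Set.mem_insert_of_mem _ rfl)))
  have hclone := isClone_cloneGen (A := U) G
  -- every gend m is generated
  have hword : ∀ m, ∃ w : U →[L] U, opOfEnd w ∈ cloneGen U G ∧ ∀ u, w u = jC (ins m u) := by
    intro m
    induction m with
    | zero => exact ⟨β, hβG, fun u => rfl⟩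
    | succ m ih =>
      obtain ⟨w, hwG, hw⟩ := ih
      refine ⟨δ.comp w, opOfEnd_comp_mem hclone hδG hwG, fun u => ?_⟩
      show δ (w u) = _
      rw [hw u, hδ (ins m u), hdpoint m u]
  have hgendG : ∀ m, opOfEnd (gend m) ∈ cloneGen U G := by
    intro m
    obtain ⟨w, hwG, hw⟩ := hword m
    have hcomp := opOfEnd_comp_mem hclone hτG hwG
    have : opOfEnd (τ.comp w) = opOfEnd (gend m) := by
      unfold opOfEnd
      congr 1
      funext x
      show τ (w (x 0)) = gend m (x 0)
      rw [hw (x 0)]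
      exact (hTC 0 (ins m (x 0))).trans (htpoint m (x 0))
    rw [← this]
    exact hcomp
  -- assemble
  refine ⟨G, ?_, ?_, ?_⟩
  · exact (Set.finite_singleton _).insert _ |>.insert _ |>.insert _
  · intro op hop
    rcases hop with h | h | h | h
    · rw [h]; exact opOfEnd_mem_polSet τ
    · rw [h]; exact opOfEnd_mem_polSet δ
    · rw [h]; exact opOfEnd_mem_polSet β
    · rw [h]; exact ⟨jsq.toHom, rfl⟩
  · intro n
    have hmem := hclone.comp 0 (ops n).1 (fun x => gend n (x 0))
      (fun _ => ebarF (⇑jsq) (ops n).1) (hgendG n) (fun _ => ebarF_mem hclone heG (ops n).1)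
    have hrep : (⟨(ops n).1, fun x => gend n (ebarF (⇑jsq) (ops n).1 x)⟩ : Ops U) = ops n := by
      have h2 : (fun x => gend n (ebarF (⇑jsq) (ops n).1 x)) = (ops n).2 := by
        funext x
        exact hgend n x
      rw [h2]
      rfl
    rw [← hrep]
    exact hmem

end Sierpinski

end Statement15Aux

open UHomog CloneTheory FirstOrder FirstOrder.Language in
/-- Theorem: if `K` is a strict Fraïssé class closed under finite products, with the HAP, such
that the coproduct of `ℵ₀` copies of the Fraïssé limit `U` exists in `(K̄,→)` and `End U` is not
finitely generated, then the polymorphism clone `Pol U` has uncountable cofinality. -/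
theorem statement15
    (L : FirstOrder.Language.{u, v})
    [Countable (Σ l, L.Functions l)] [Countable (Σ l, L.Relations l)]
    (K : Set (Bundled.{w} L.Structure)) (hK : IsStrictFraisse L K)
    (U : Type w) [L.Structure U] [Countable U] (hU : IsFraisseLimit K U)
    (hprod : ∀ A B : Bundled.{w} L.Structure, A ∈ K → B ∈ K →
      (Bundled.of (↥A × ↥B) : Bundled.{w} L.Structure) ∈ K)
    (hhap : HAP L K)
    (hcoprod : CoproductOfCopiesExists L K U)
    (hend : ¬ EndFinitelyGenerated L U) :
    UncountableCofinality U (PolSet L U) := by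
  classical
  have hNU : Nonempty U := by
    by_contra hne
    rw [not_nonempty_iff] at hne
    apply hend
    refine ⟨∅, Set.finite_empty, ?_⟩
    apply Set.eq_univ_of_forall
    intro f T hT
    have hf : f = Hom.id L U := Hom.ext (fun x => isEmptyElim x)
    rw [hf]
    exact hT.2.1
  haveI := hNU
  rintro ⟨c, hclone, hsub, hmonoc, hneq, hunion⟩
  have hopex : ∀ n, ∃ op, op ∈ PolSet L U ∧ op ∉ c n := by
    intro n
    by_contra hcon
    push_neg at hcon
    exact hneq n (Set.Subset.antisymm (hsub n) (fun op hop => hcon op hop))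
  choose ops hopsF hopsN using hopex
  obtain ⟨G, hGfin, hGsub, hGgen⟩ :=
    Statement15Aux.sierpinski hK hU hhap hprod hcoprod ops hopsF
  have hMc : Monotone c := monotone_nat_of_le_succ hmonoc
  have hGidx : ∀ op : G, ∃ m, (op : Ops U) ∈ c m := by
    intro op
    have h1 : (op : Ops U) ∈ PolSet L U := hGsub op.2
    rw [← hunion] at h1
    exact Set.mem_iUnion.1 h1
  choose idx hidx using hGidx
  haveI : Finite ↥G := hGfin.to_subtype
  obtain ⟨M, hM⟩ := Finite.exists_le idx
  have hGM : G ⊆ c M := fun op hop => hMc (hM ⟨op, hop⟩) (hidx ⟨op, hop⟩)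
  exact hopsN M (Statement15Aux.cloneGen_subset (hclone M) hGM (hGgen M))
end

section
/- Let λ be a regular cardinal, let ℭ be a semi-λ-algebroidal category all of whose morphisms are monomorphisms, and for some μ < λ let F : μ → ℭ be a μ-chain such that F(i) is λ-small for every i < μ. Then every colimit S of F in ℭ is λ-small. -/
universe u u₁ v₁ u₂ v₂ u₃ v₃

open CategoryTheory CategoryTheory.Limits

namespace DGFraisse

variable {C : Type u₁} [Category.{v₁} C]

/-- An object `A` of a category is `λ`-small if every morphism from `A` into the colimit of a
`λ`-chain factors through some member of the chain. -/
def LamSmall (lam : Cardinal.{u}) (A : C) : Prop :=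
  ∀ (H : lam.ord.ToType ⥤ C) (c : Cocone H), IsColimit c →
    ∀ h : A ⟶ c.pt, ∃ (j : lam.ord.ToType) (g : A ⟶ H.obj j), g ≫ c.ι.app j = h

variable (C)

/-- A category is semi-`λ`-algebroidal if all `μ`-chains (`μ ≤ λ`) of `λ`-small objects have
colimits, and every object is the colimit of a `λ`-chain of `λ`-small objects. -/
def SemiAlgebroidal (lam : Cardinal.{u}) : Prop :=
  (∀ (μ : Ordinal.{u}), μ ≤ lam.ord → ∀ (H : μ.ToType ⥤ C),
      (∀ i, LamSmall lam (H.obj i)) → ∃ c : Cocone H, Nonempty (IsColimit c)) ∧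
  (∀ A : C, ∃ (H : lam.ord.ToType ⥤ C) (c : Cocone H),
      Nonempty (IsColimit c) ∧ (∀ i, LamSmall lam (H.obj i)) ∧ Nonempty (c.pt ≅ A))

/-- A category is `λ`-algebroidal if it is semi-`λ`-algebroidal, has at most `λ` isomorphism
classes of `λ`-small objects, and at most `λ` morphisms between any two `λ`-small objects. -/
def Algebroidal (lam : Cardinal.{u}) : Prop :=
  SemiAlgebroidal C lam ∧
  (∃ S : Set C, Cardinal.lift.{u} (Cardinal.mk S) ≤ Cardinal.lift.{u₁} lam ∧
      ∀ A : C, LamSmall lam A → ∃ B ∈ S, Nonempty (A ≅ B)) ∧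
  (∀ A B : C, LamSmall lam A → LamSmall lam B →
      Cardinal.lift.{u} (Cardinal.mk (A ⟶ B)) ≤ Cardinal.lift.{v₁} lam)

variable {C}

/-- `U` is universal for the objects satisfying `P`. -/
def UniversalFor (P : C → Prop) (U : C) : Prop := ∀ X, P X → Nonempty (X ⟶ U)

/-- `U` is homogeneous for the objects satisfying `P`. -/
def HomogeneousFor (P : C → Prop) (U : C) : Prop :=
  ∀ X, P X → ∀ f g : X ⟶ U, ∃ h : U ≅ U, f ≫ h.hom = g

/-- `U` is saturated for the objects satisfying `P`. -/
def SaturatedFor (P : C → Prop) (U : C) : Prop :=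
  ∀ X Y, P X → P Y → ∀ (f : X ⟶ U) (g : X ⟶ Y), ∃ h : Y ⟶ U, g ≫ h = f

/-- The joint embedding property for the subcategory of objects satisfying `P`. -/
def JEPOn (P : C → Prop) : Prop :=
  ∀ X Y : C, P X → P Y → ∃ Z : C, P Z ∧ Nonempty (X ⟶ Z) ∧ Nonempty (Y ⟶ Z)

/-- The amalgamation property for the subcategory of objects satisfying `P`. -/
def APOn (P : C → Prop) : Prop :=
  ∀ (X Y Z : C), P X → P Y → P Z → ∀ (f : X ⟶ Y) (g : X ⟶ Z),
    ∃ (W : C), P W ∧ ∃ (f' : Y ⟶ W) (g' : Z ⟶ W), f ≫ f' = g ≫ g'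

variable {A : Type u₁} [Category.{v₁} A] {B : Type u₂} [Category.{v₂} B]
variable {C' : Type u₃} [Category.{v₃} C']

/-- A functor is `λ`-cocontinuous if it maps colimiting cocones of `λ`-chains to colimiting
cocones. -/
def LamCocontinuous (lam : Cardinal.{u}) (F : A ⥤ C') : Prop :=
  ∀ (H : lam.ord.ToType ⥤ A) (c : Cocone H), IsColimit c →
    Nonempty (IsColimit (F.mapCocone c))

/-- A functor is `μ_{<λ}`-cocontinuous if it maps colimiting cocones of `μ`-chains of `λ`-small
objects to colimiting cocones. -/
def MuCocontinuous (lam : Cardinal.{u}) (μ : Ordinal.{u}) (F : A ⥤ C') : Prop :=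
  ∀ (H : μ.ToType ⥤ A), (∀ i, LamSmall lam (H.obj i)) →
    ∀ (c : Cocone H), IsColimit c → Nonempty (IsColimit (F.mapCocone c))

/-- `F` preserves `λ`-smallness with respect to `G`. -/
def PreservesLamSmallness (lam : Cardinal.{u}) (F : A ⥤ C') (G : B ⥤ C') : Prop :=
  ∀ (H : lam.ord.ToType ⥤ B) (c : Cocone H), IsColimit c →
    ∀ (X : A), LamSmall lam X → ∀ f : F.obj X ⟶ G.obj c.pt,
      ∃ (j : lam.ord.ToType) (h : F.obj X ⟶ G.obj (H.obj j)), h ≫ G.map (c.ι.app j) = f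

/-- The `(F,G)`-joint embedding property, restricted to `λ`-small objects. -/
def FGJepOnSmall (lam : Cardinal.{u}) (F : A ⥤ C') (G : B ⥤ C') : Prop :=
  ∀ (B₁ B₂ : A), LamSmall lam B₁ → LamSmall lam B₂ →
    ∀ (T : B), LamSmall lam T → ∀ (h₁ : F.obj B₁ ⟶ G.obj T) (h₂ : F.obj B₂ ⟶ G.obj T),
      ∃ (Cc : A) (_ : LamSmall lam Cc) (T' : B) (_ : LamSmall lam T')
        (f₁ : B₁ ⟶ Cc) (f₂ : B₂ ⟶ Cc) (h : F.obj Cc ⟶ G.obj T') (k₁ k₂ : T ⟶ T'),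
        F.map f₁ ≫ h = h₁ ≫ G.map k₁ ∧ F.map f₂ ≫ h = h₂ ≫ G.map k₂

/-- The `(F,G)`-amalgamation property, restricted to `λ`-small objects. -/
def FGAmalgOnSmall (lam : Cardinal.{u}) (F : A ⥤ C') (G : B ⥤ C') : Prop :=
  ∀ (X B₁ B₂ : A), LamSmall lam X → LamSmall lam B₁ → LamSmall lam B₂ →
    ∀ (f₁ : X ⟶ B₁) (f₂ : X ⟶ B₂) (T : B), LamSmall lam T →
      ∀ (h₁ : F.obj B₁ ⟶ G.obj T) (h₂ : F.obj B₂ ⟶ G.obj T),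
        F.map f₁ ≫ h₁ = F.map f₂ ≫ h₂ →
        ∃ (Cc : A) (_ : LamSmall lam Cc) (g₁ : B₁ ⟶ Cc) (g₂ : B₂ ⟶ Cc),
          f₁ ≫ g₁ = f₂ ≫ g₂ ∧
          ∃ (T' : B) (_ : LamSmall lam T') (k : T ⟶ T') (h : F.obj Cc ⟶ G.obj T'),
            F.map g₁ ≫ h = h₁ ≫ G.map k ∧ F.map g₂ ≫ h = h₂ ≫ G.map k


theorem exists_forall_lt_of_mk_lt_cof {α ι : Type u} [LinearOrder α] (f : ι → α)
    (h : Cardinal.mk ι < Order.cof α) : ∃ a, ∀ i, f i < a := by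
  have : ¬ IsCofinal (Set.range f) := fun hf =>
    ((Order.cof_le hf).trans Cardinal.mk_range_le).not_gt h
  simpa [IsCofinal] using this

theorem IsColimit.exists_comp_eq_of_mono {J : Type*} [Category J] {C : Type*} [Category C]
    {H : J ⥤ C} {c : Cocone H} (hc : IsColimit c) {Y Z : C} (h : c.pt ⟶ Y) (m : Z ⟶ Y) [Mono m]
    (g : ∀ j, H.obj j ⟶ Z) (hg : ∀ j, g j ≫ m = c.ι.app j ≫ h) :
    ∃ k : c.pt ⟶ Z, k ≫ m = h :=
  let K : Cocone H :=
    { pt := Z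
      ι := { app := g
             naturality := fun _ _ f => by
               rw [← cancel_mono m]
               simp [hg] } }
  ⟨hc.desc K, hc.hom_ext fun j => by rw [hc.fac_assoc, hg]⟩

/-- Each leg `c.ι.app j ≫ h` factors through some stage of the `λ`-chain; fewer than `cof λ`
stages have a common upper bound `m`, and as `d.ι.app m` is mono, the factorizations pushed to
stage `m` form a cocone on `H`. -/
theorem lamSmall_pt_of_isColimit {lam : Cardinal.{u}} {C : Type u₁} [Category.{v₁} C]
    (hmono : ∀ {X Y : C} (f : X ⟶ Y), Mono f) {J : Type u} [Category J]
    (hJ : Cardinal.mk J < lam.ord.cof) {H : J ⥤ C} (hsmall : ∀ j, LamSmall lam (H.obj j))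
    {c : Cocone H} (hc : IsColimit c) : LamSmall lam c.pt := by
  intro G d hd h
  choose k g hg using fun j => hsmall j G d hd (c.ι.app j ≫ h)
  obtain ⟨m, hkm⟩ := exists_forall_lt_of_mk_lt_cof k (by rwa [Ordinal.cof_toType])
  have := hmono (d.ι.app m)
  obtain ⟨f, hf⟩ := IsColimit.exists_comp_eq_of_mono hc h (d.ι.app m)
    (fun j => g j ≫ G.map (homOfLE (hkm j).le)) fun j => by rw [Category.assoc, d.w, hg]
  exact ⟨m, f, hf⟩

end DGFraisse

open DGFraisse CategoryTheory CategoryTheory.Limits in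
theorem statement19_general
    (lam : Cardinal.{u}) (hreg : lam.IsRegular)
    {C : Type u₁} [Category.{v₁} C]
    (hmono : ∀ {X Y : C} (f : X ⟶ Y), Mono f)
    (μ : Ordinal.{u}) (hμ : μ < lam.ord)
    (H : μ.ToType ⥤ C) (hsmall : ∀ i, LamSmall lam (H.obj i))
    (c : Cocone H) (hc : IsColimit c) :
    LamSmall lam c.pt :=
  lamSmall_pt_of_isColimit hmono
    (by rw [Cardinal.mk_toType, hreg.cof_ord]; exact Cardinal.lt_ord.mp hμ) hsmall hc

open DGFraisse CategoryTheory CategoryTheory.Limits in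
/-- Lemma: in a semi-`λ`-algebroidal category (λ regular) all of whose morphisms are
monomorphisms, the colimit of a `μ`-chain (`μ < λ`) of `λ`-small objects is `λ`-small. -/
theorem statement19
    (lam : Cardinal.{u}) (hreg : lam.IsRegular)
    {C : Type u₁} [Category.{v₁} C]
    (hC : SemiAlgebroidal C lam)
    (hmono : ∀ {X Y : C} (f : X ⟶ Y), Mono f)
    (μ : Ordinal.{u}) (hμ : μ < lam.ord)
    (H : μ.ToType ⥤ C) (hsmall : ∀ i, LamSmall lam (H.obj i))
    (c : Cocone H) (hc : IsColimit c) :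
    LamSmall lam c.pt :=
  statement19_general lam hreg hmono μ hμ H hsmall c hc
end
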